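/- arXiv:2308.00707 — 3 statements merged into one kernel-verified Lean document; each statement's English description precedes it below -/
import Mathlib

section
/- Let S be a finite state set and let 𝒯, 𝒯̂ : S × S → [0,1] be two transition systems (Markov kernels) on S with the same initial state distribution ι on S. For t ∈ ℕ let 𝒯ᵗ and 𝒯̂ᵗ denote the respective marginal distributions on S of the state at time t of the Markov chains started from ι. If D_TV(𝒯(·∣s), 𝒯̂(·∣s)) ≤ α for every state s ∈ S, then D_TV(𝒯ᵗ, 𝒯̂ᵗ) ≤ α·t for every t ∈ ℕ. -/
/-- Marginal state distribution at time `t` of the Markov chain with kernel `T`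
(where `T s s'` is the probability of moving to `s'` from `s`) and initial
distribution `ι`. -/
noncomputable def marginal {S : Type*} [Fintype S] (T : S → S → ℝ) (ι : S → ℝ) :
    ℕ → S → ℝ
  | 0 => ι
  | t + 1 => fun s => ∑ sb, T sb s * marginal T ι t sb

/-- Total variation distance between two distributions on a finite set. -/
noncomputable def tvDist {S : Type*} [Fintype S] (p q : S → ℝ) : ℝ :=
  (1 / 2) * ∑ s, |p s - q s|

lemma marginal_nonneg {S : Type*} [Fintype S] (T : S → S → ℝ) (ι : S → ℝ)
    (hT0 : ∀ s s', 0 ≤ T s s') (hι0 : ∀ s, 0 ≤ ι s) :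
    ∀ t s, 0 ≤ marginal T ι t s := by
  intro t
  induction t with
  | zero => exact hι0
  | succ t ih =>
    intro s
    exact Finset.sum_nonneg fun sb _ => mul_nonneg (hT0 sb s) (ih sb)

lemma marginal_sum {S : Type*} [Fintype S] (T : S → S → ℝ) (ι : S → ℝ)
    (hT1 : ∀ s, ∑ s', T s s' = 1) (hι1 : ∑ s, ι s = 1) :
    ∀ t, ∑ s, marginal T ι t s = 1 := by
  intro t
  induction t with
  | zero => exact hι1
  | succ t ih =>
    show ∑ s, ∑ sb, T sb s * marginal T ι t sb = 1
    rw [Finset.sum_comm]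
    calc ∑ sb, ∑ s, T sb s * marginal T ι t sb
        = ∑ sb, marginal T ι t sb := by
          refine Finset.sum_congr rfl fun sb _ => ?_
          rw [← Finset.sum_mul, hT1 sb, one_mul]
      _ = 1 := ih

/-- **error amplification.** If the one-step kernels of two transition
systems are everywhere within total variation `α`, then the time-`t` marginals of the
chains started from a common initial distribution are within total variation `α·t`. -/
theorem ambs_error_amplification {S : Type*} [Fintype S] (T That : S → S → ℝ)
    (ι : S → ℝ)
    (hT0 : ∀ s s', 0 ≤ T s s') (hT1 : ∀ s, ∑ s', T s s' = 1)
    (hThat0 : ∀ s s', 0 ≤ That s s') (hThat1 : ∀ s, ∑ s', That s s' = 1)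
    (hι0 : ∀ s, 0 ≤ ι s) (hι1 : ∑ s, ι s = 1)
    (α : ℝ) (hα : ∀ s, tvDist (T s) (That s) ≤ α) :
    ∀ t : ℕ, tvDist (marginal T ι t) (marginal That ι t) ≤ α * t := by
  intro t
  induction t with
  | zero =>
    simp [tvDist, marginal]
  | succ t ih =>
    set p := marginal T ι t
    set q := marginal That ι t
    have hp0 : ∀ s, 0 ≤ p s := marginal_nonneg T ι hT0 hι0 t
    have hp1 : ∑ s, p s = 1 := marginal_sum T ι hT1 hι1 t
    have key : ∑ s, |marginal T ι (t+1) s - marginal That ι (t+1) s|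
        ≤ 2 * α + ∑ sb, |p sb - q sb| := by
      have step1 : ∀ s, |marginal T ι (t+1) s - marginal That ι (t+1) s|
          ≤ ∑ sb, |T sb s - That sb s| * p sb + ∑ sb, That sb s * |p sb - q sb| := by
        intro s
        have : marginal T ι (t+1) s - marginal That ι (t+1) s
            = ∑ sb, ((T sb s - That sb s) * p sb + That sb s * (p sb - q sb)) := by
          show (∑ sb, T sb s * p sb) - (∑ sb, That sb s * q sb) = _
          rw [← Finset.sum_sub_distrib]
          refine Finset.sum_congr rfl fun sb _ => by ring
        rw [this]
        calc |∑ sb, ((T sb s - That sb s) * p sb + That sb s * (p sb - q sb))|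
            ≤ ∑ sb, |(T sb s - That sb s) * p sb + That sb s * (p sb - q sb)| :=
              Finset.abs_sum_le_sum_abs _ _
          _ ≤ ∑ sb, (|T sb s - That sb s| * p sb + That sb s * |p sb - q sb|) := by
              refine Finset.sum_le_sum fun sb _ => ?_
              refine (abs_add_le _ _).trans ?_
              rw [abs_mul, abs_mul, abs_of_nonneg (hp0 sb), abs_of_nonneg (hThat0 sb s)]
          _ = ∑ sb, |T sb s - That sb s| * p sb + ∑ sb, That sb s * |p sb - q sb| :=
              Finset.sum_add_distrib
      calc ∑ s, |marginal T ι (t+1) s - marginal That ι (t+1) s|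
          ≤ ∑ s, (∑ sb, |T sb s - That sb s| * p sb + ∑ sb, That sb s * |p sb - q sb|) :=
            Finset.sum_le_sum fun s _ => step1 s
        _ = ∑ sb, (∑ s, |T sb s - That sb s|) * p sb
            + ∑ sb, (∑ s, That sb s) * |p sb - q sb| := by
            rw [Finset.sum_add_distrib]
            congr 1 <;>
            · rw [Finset.sum_comm]
              exact Finset.sum_congr rfl fun sb _ => by rw [Finset.sum_mul]
        _ ≤ ∑ sb, (2 * α) * p sb + ∑ sb, 1 * |p sb - q sb| := by
            refine add_le_add (Finset.sum_le_sum fun sb _ => ?_)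
              (Finset.sum_le_sum fun sb _ => ?_)
            · refine mul_le_mul_of_nonneg_right ?_ (hp0 sb)
              have := hα sb
              unfold tvDist at this
              linarith
            · rw [hThat1 sb]
        _ = 2 * α + ∑ sb, |p sb - q sb| := by
            rw [← Finset.mul_sum, hp1]
            simp
    have hih : (1/2 : ℝ) * ∑ sb, |p sb - q sb| ≤ α * t := ih
    have heq : tvDist (marginal T ι (t+1)) (marginal That ι (t+1))
        = (1/2 : ℝ) * ∑ s, |marginal T ι (t+1) s - marginal That ι (t+1) s| := rfl
    rw [heq]
    push_cast
    linarith
end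

section
/- Let S be a finite state set and let 𝒯, 𝒯̂ : S × S → [0,1] be two transition systems (Markov kernels) on S. Fix a start state s ∈ S, a horizon n ∈ ℕ, and a set G ⊆ S of safe states, and let μ_{s⊨φ} and μ̂_{s⊨φ} be the probabilities, under the Markov measures on length-n traces of 𝒯 and of 𝒯̂ respectively started at s, that every state of the trace lies in G. If D_TV(𝒯(·∣s̄), 𝒯̂(·∣s̄)) ≤ α for every s̄ ∈ S, then |μ_{s⊨φ} − μ̂_{s⊨φ}| ≤ n·α. -/
open Classical in
noncomputable def safeProb {S : Type*} [Fintype S] (T : S → S → ℝ)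
    (s : S) (n : ℕ) (G : Set S) : ℝ :=
  ∑ τ : Fin (n + 1) → S,
    if τ 0 = s ∧ ∀ i, τ i ∈ G then ∏ i : Fin n, T (τ i.castSucc) (τ i.succ) else 0

open Classical in
lemma safeProb_zero {S : Type*} [Fintype S] (T : S → S → ℝ) (s : S) (G : Set S) :
    safeProb T s 0 G = if s ∈ G then 1 else 0 := by
  unfold safeProb
  rw [← (Equiv.funUnique (Fin 1) S).symm.sum_comp]
  simp [Equiv.funUnique, ite_and, Finset.sum_ite_eq']

open Classical in
lemma safeProb_succ {S : Type*} [Fintype S] (T : S → S → ℝ) (s : S) (n : ℕ) (G : Set S) :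
    safeProb T s (n+1) G = if s ∈ G then ∑ s', T s s' * safeProb T s' n G else 0 := by
  unfold safeProb
  have step : ∀ (f : (Fin (n+2) → S) → ℝ),
      ∑ τ : Fin (n+2) → S, f τ = ∑ a : S, ∑ τ : Fin (n+1) → S, f (Fin.cons a τ) := by
    intro f
    rw [← (Fin.consEquiv (fun _ : Fin (n+2) => S)).sum_comp, Fintype.sum_prod_type]
    rfl
  rw [step]
  have key : ∀ (a : S) (τ : Fin (n+1) → S),
      (if (Fin.cons a τ : Fin (n+2) → S) 0 = s ∧ (∀ i, (Fin.cons a τ : Fin (n+2) → S) i ∈ G)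
        then ∏ i : Fin (n+1), T ((Fin.cons a τ : Fin (n+2) → S) i.castSucc)
          ((Fin.cons a τ : Fin (n+2) → S) i.succ) else 0)
      = if a = s then (if a ∈ G then
          T a (τ 0) * (if (∀ i, τ i ∈ G) then ∏ i : Fin n, T (τ i.castSucc) (τ i.succ) else 0)
        else 0) else 0 := by
    intro a τ
    have hforall : (∀ i, (Fin.cons a τ : Fin (n+2) → S) i ∈ G) ↔ (a ∈ G ∧ ∀ i, τ i ∈ G) := by
      constructor
      · intro h
        exact ⟨by simpa using h 0, fun i => by simpa using h i.succ⟩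
      · rintro ⟨h1, h2⟩ i
        refine Fin.cases ?_ ?_ i
        · simpa using h1
        · intro j; simpa using h2 j
    have hprod : (∏ i : Fin (n+1), T ((Fin.cons a τ : Fin (n+2) → S) i.castSucc)
          ((Fin.cons a τ : Fin (n+2) → S) i.succ))
        = T a (τ 0) * ∏ i : Fin n, T (τ i.castSucc) (τ i.succ) := by
      rw [Fin.prod_univ_succ]
      have h0 : T ((Fin.cons a τ : Fin (n+2) → S) ((0 : Fin (n+1)).castSucc))
          ((Fin.cons a τ : Fin (n+2) → S) ((0 : Fin (n+1)).succ)) = T a (τ 0) := by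
        simp [Fin.succ_zero_eq_one]
      rw [h0]
      congr 1
    simp only [Fin.cons_zero, hforall, hprod]
    by_cases h1 : a = s <;> by_cases h2 : a ∈ G <;> by_cases h3 : ∀ i, τ i ∈ G <;>
      simp [h1, h2, h3]
  rw [show (∑ a : S, ∑ τ : Fin (n+1) → S,
      if (Fin.cons a τ : Fin (n+2) → S) 0 = s ∧ (∀ i, (Fin.cons a τ : Fin (n+2) → S) i ∈ G)
        then ∏ i : Fin (n+1), T ((Fin.cons a τ : Fin (n+2) → S) i.castSucc)
          ((Fin.cons a τ : Fin (n+2) → S) i.succ) else 0)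
      = ∑ a : S, ∑ τ : Fin (n+1) → S,
        if a = s then (if a ∈ G then
          T a (τ 0) * (if (∀ i, τ i ∈ G) then ∏ i : Fin n, T (τ i.castSucc) (τ i.succ) else 0)
        else 0) else 0 from
    Finset.sum_congr rfl fun a _ => Finset.sum_congr rfl fun τ _ => key a τ]
  have pull : ∀ a : S, (∑ τ : Fin (n+1) → S,
      if a = s then (if a ∈ G then
          T a (τ 0) * (if (∀ i, τ i ∈ G) then ∏ i : Fin n, T (τ i.castSucc) (τ i.succ) else 0)
        else 0) else 0)
      = if a = s then (∑ τ : Fin (n+1) → S, if a ∈ G then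
          T a (τ 0) * (if (∀ i, τ i ∈ G) then ∏ i : Fin n, T (τ i.castSucc) (τ i.succ) else 0)
        else 0) else 0 := by
    intro a
    by_cases h : a = s <;> simp [h]
  simp only [pull]
  rw [Finset.sum_ite_eq' Finset.univ s]
  simp only [Finset.mem_univ, if_true]
  by_cases hs : s ∈ G
  · simp only [hs, if_true]
    simp only [Finset.mul_sum]
    rw [Finset.sum_comm]
    refine Finset.sum_congr rfl fun τ _ => ?_
    have hterm : ∀ s' : S, T s s' *
        (if τ 0 = s' ∧ (∀ i, τ i ∈ G) then ∏ i : Fin n, T (τ i.castSucc) (τ i.succ) else 0)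
        = if τ 0 = s' then T s s' *
            (if (∀ i, τ i ∈ G) then ∏ i : Fin n, T (τ i.castSucc) (τ i.succ) else 0) else 0 := by
      intro s'
      by_cases h1 : τ 0 = s' <;> by_cases h2 : ∀ i, τ i ∈ G <;> simp [h1, h2]
    rw [Finset.sum_congr rfl fun s' _ => hterm s', Finset.sum_ite_eq Finset.univ (τ 0)]
    simp
  · simp [hs]

lemma safeProb_nonneg {S : Type*} [Fintype S] (T : S → S → ℝ)
    (hT0 : ∀ s s', 0 ≤ T s s') (s : S) (n : ℕ) (G : Set S) : 0 ≤ safeProb T s n G := by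
  classical
  unfold safeProb
  refine Finset.sum_nonneg fun τ _ => ?_
  split
  · exact Finset.prod_nonneg fun i _ => hT0 _ _
  · exact le_rfl

lemma safeProb_le_one {S : Type*} [Fintype S] (T : S → S → ℝ)
    (hT0 : ∀ s s', 0 ≤ T s s') (hT1 : ∀ s, ∑ s', T s s' = 1)
    (s : S) (n : ℕ) (G : Set S) : safeProb T s n G ≤ 1 := by
  induction n generalizing s with
  | zero => rw [safeProb_zero]; split <;> norm_num
  | succ n ih =>
      rw [safeProb_succ]
      split
      · calc ∑ s', T s s' * safeProb T s' n G ≤ ∑ s', T s s' * 1 := by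
              refine Finset.sum_le_sum fun s' _ => ?_
              exact mul_le_mul_of_nonneg_left (ih s') (hT0 s s')
          _ = 1 := by simp [hT1 s]
      · norm_num

/-- **simulation lemma for bounded safety.** If the one-step kernels of
two transition systems are everywhere within total variation `α`, then their
bounded-safety probabilities over horizon `n` differ by at most `n·α`. -/
theorem ambs_simulation_lemma {S : Type*} [Fintype S] (T That : S → S → ℝ)
    (hT0 : ∀ s s', 0 ≤ T s s') (hT1 : ∀ s, ∑ s', T s s' = 1)
    (hThat0 : ∀ s s', 0 ≤ That s s') (hThat1 : ∀ s, ∑ s', That s s' = 1)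
    (s : S) (n : ℕ) (G : Set S)
    (α : ℝ) (hα : ∀ sb, tvDist (T sb) (That sb) ≤ α) :
    |safeProb T s n G - safeProb That s n G| ≤ n * α := by
  have hαnn : 0 ≤ α := by
    refine le_trans ?_ (hα s)
    unfold tvDist
    positivity
  induction n generalizing s with
  | zero => simp [safeProb_zero]
  | succ n ih =>
      rw [safeProb_succ, safeProb_succ]
      by_cases hs : s ∈ G
      · simp only [hs, if_true]
        set f : S → ℝ := fun s' => safeProb T s' n G with hf
        set g : S → ℝ := fun s' => safeProb That s' n G with hg
        have expand : ∀ s', (T s s' - That s s') * (f s' - 1/2) + That s s' * (f s' - g s')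
            = T s s' * f s' - That s s' * g s' - (1/2) * (T s s' - That s s') := by
          intro s'; ring
        have hsum : ∑ s', T s s' * f s' - ∑ s', That s s' * g s'
            = (∑ s', (T s s' - That s s') * (f s' - 1/2))
              + ∑ s', That s s' * (f s' - g s') := by
          rw [← Finset.sum_add_distrib]
          rw [Finset.sum_congr rfl fun s' _ => expand s']
          rw [Finset.sum_sub_distrib, Finset.sum_sub_distrib, ← Finset.mul_sum,
            Finset.sum_sub_distrib, hT1 s, hThat1 s]
          ring
        rw [hsum]
        have h1 : |∑ s', (T s s' - That s s') * (f s' - 1/2)| ≤ α := by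
          calc |∑ s', (T s s' - That s s') * (f s' - 1/2)|
              ≤ ∑ s', |(T s s' - That s s') * (f s' - 1/2)| := Finset.abs_sum_le_sum_abs _ _
            _ ≤ ∑ s', |T s s' - That s s'| * (1/2) := by
                refine Finset.sum_le_sum fun s' _ => ?_
                rw [abs_mul]
                refine mul_le_mul_of_nonneg_left ?_ (abs_nonneg _)
                have h2 := safeProb_nonneg T hT0 s' n G
                have h3 := safeProb_le_one T hT0 hT1 s' n G
                rw [abs_le]
                constructor <;> simp only [hf] <;> linarith
            _ = tvDist (T s) (That s) := by
                unfold tvDist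
                rw [Finset.mul_sum]
                refine Finset.sum_congr rfl fun s' _ => ?_
                ring
            _ ≤ α := hα s
        have h2 : |∑ s', That s s' * (f s' - g s')| ≤ n * α := by
          calc |∑ s', That s s' * (f s' - g s')|
              ≤ ∑ s', |That s s' * (f s' - g s')| := Finset.abs_sum_le_sum_abs _ _
            _ ≤ ∑ s', That s s' * (n * α) := by
                refine Finset.sum_le_sum fun s' _ => ?_
                rw [abs_mul, abs_of_nonneg (hThat0 s s')]
                exact mul_le_mul_of_nonneg_left (ih s') (hThat0 s s')
            _ = n * α := by rw [← Finset.sum_mul, hThat1 s, one_mul]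
        calc |(∑ s', (T s s' - That s s') * (f s' - 1/2)) + ∑ s', That s s' * (f s' - g s')|
            ≤ |∑ s', (T s s' - That s s') * (f s' - 1/2)|
              + |∑ s', That s s' * (f s' - g s')| := abs_add_le _ _
          _ ≤ α + n * α := add_le_add h1 h2
          _ = (n + 1 : ℕ) * α := by push_cast; ring
      · simp only [hs, if_false, sub_zero, abs_zero]
        positivity
end

section
/- Let S and A be finite sets, let p : S × A × S → [0,1] be a transition function with Σ_{s'} p(s'∣s,a) = 1 for all (s,a), and let π : S × A → [0,1] be a stochastic policy with Σ_a π(a∣s) = 1 for all s. Fix a state s ∈ S, let α > 0 and δ > 0, and set η = α/(|A|·|S|). Suppose that for every action a ∈ A with π(a∣s) ≥ η, the empirical estimate p̂(s'∣s,a) is formed as the fraction of m_a independent samples from p(·∣s,a) equal to s', where m_a ≥ (|S|²/α²)·log(2·|A|·|S|/δ). Then with probability at least 1 − δ, the total variation distance between the induced next-state distributions 𝒯(s'∣s) = Σ_a π(a∣s)·p(s'∣s,a) and 𝒯̂(s'∣s) = Σ_a π(a∣s)·p̂(s'∣s,a) is at most α, where for actions with π(a∣s) < η the values p̂(·∣s,a)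 may be an arbitrary probability distribution on S. -/
open MeasureTheory ProbabilityTheory Classical

/-!
Split the actions at the threshold `η = α / (|A| |S|)`. For an action with `π a ≥ η`, Hoeffding's
inequality and the sample size make each empirical frequency `p̂(s' ∣ s, a)` lie within
`α / |S|` of `p(s' ∣ s, a)` outside an event of probability `δ / (|A| |S|)`; a union bound over the
pairs `(a, s')` makes this hold simultaneously with probability at least `1 - δ`. On that event
the total variation distance of the two mixtures is at most the `π`-average of the componentwise
distances: the heavy actions contribute at most `|S| · (α / |S|) / 2 = α / 2`, and the light
ones, of weight below `η` each, at most `|A| η · |S| / 2 = α / 2`.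
-/

open Finset

section TotalVariation

variable {S A : Type*} [Fintype S] [Fintype A]

lemma card_pos_of_sum_eq_one {w : S → ℝ} (hw : ∑ s, w s = 1) : 0 < Fintype.card S :=
  Fintype.card_pos_iff.mpr <| univ_nonempty_iff.mp <| nonempty_of_sum_ne_zero (hw ▸ one_ne_zero)

lemma tvDist_nonneg (p q : S → ℝ) : 0 ≤ tvDist p q := by
  unfold tvDist; positivity

lemma tvDist_le_of_forall_abs_sub_le {p q : S → ℝ} {ε : ℝ} (h : ∀ s, |p s - q s| ≤ ε) :
    tvDist p q ≤ Fintype.card S * ε / 2 := by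
  unfold tvDist
  have := sum_le_sum fun s (_ : s ∈ univ) => h s
  simp only [sum_const, card_univ, nsmul_eq_mul] at this
  linarith

lemma le_one_of_sum_eq_one {p : S → ℝ} (hp0 : ∀ s, 0 ≤ p s) (hp1 : ∑ s, p s = 1) (s : S) :
    p s ≤ 1 :=
  hp1 ▸ single_le_sum (fun t _ => hp0 t) (mem_univ s)

lemma tvDist_le_card_div_two {p q : S → ℝ} (hp0 : ∀ s, 0 ≤ p s) (hp1 : ∑ s, p s = 1)
    (hq0 : ∀ s, 0 ≤ q s) (hq1 : ∑ s, q s = 1) :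
    tvDist p q ≤ Fintype.card S / 2 := by
  simpa using tvDist_le_of_forall_abs_sub_le fun s =>
    abs_sub_le_of_nonneg_of_le (hp0 s) (le_one_of_sum_eq_one hp0 hp1 s) (hq0 s)
      (le_one_of_sum_eq_one hq0 hq1 s)

lemma tvDist_mixture_le_sum {π : A → ℝ} (hπ0 : ∀ a, 0 ≤ π a) (p q : A → S → ℝ) :
    tvDist (fun s => ∑ a, π a * p a s) (fun s => ∑ a, π a * q a s)
      ≤ ∑ a, π a * tvDist (p a) (q a) := by
  unfold tvDist
  calc 1 / 2 * ∑ s, |∑ a, π a * p a s - ∑ a, π a * q a s|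
      ≤ 1 / 2 * ∑ s, ∑ a, π a * |p a s - q a s| := by
        gcongr with s
        rw [← sum_sub_distrib]
        refine (abs_sum_le_sum_abs _ _).trans_eq (sum_congr rfl fun a _ => ?_)
        rw [← mul_sub, abs_mul, abs_of_nonneg (hπ0 a)]
    _ = ∑ a, π a * (1 / 2 * ∑ s, |p a s - q a s|) := by
        simp only [mul_sum]
        rw [sum_comm]
        exact sum_congr rfl fun a _ => sum_congr rfl fun s _ => by ring

lemma tvDist_mixture_le {π : A → ℝ} (hπ0 : ∀ a, 0 ≤ π a) (hπ1 : ∑ a, π a = 1)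
    {p q : A → S → ℝ} {η ε B : ℝ} (hη : 0 ≤ η) (hε : 0 ≤ ε)
    (hclose : ∀ a, η ≤ π a → tvDist (p a) (q a) ≤ ε) (hB : ∀ a, tvDist (p a) (q a) ≤ B) :
    tvDist (fun s => ∑ a, π a * p a s) (fun s => ∑ a, π a * q a s)
      ≤ ε + Fintype.card A * η * B := by
  have hterm : ∀ a, π a * tvDist (p a) (q a) ≤ π a * ε + η * B := by
    intro a
    have hB0 : 0 ≤ B := (tvDist_nonneg _ _).trans (hB a)
    rcases le_or_gt η (π a) with ha | ha
    · nlinarith [hclose a ha, hπ0 a]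
    · nlinarith [hB a, tvDist_nonneg (p a) (q a), hπ0 a]
  calc _ ≤ ∑ a, π a * tvDist (p a) (q a) := tvDist_mixture_le_sum hπ0 p q
    _ ≤ ∑ a, (π a * ε + η * B) := sum_le_sum fun a _ => hterm a
    _ = ε + Fintype.card A * η * B := by
      rw [sum_add_distrib, ← sum_mul, hπ1, sum_const, card_univ, nsmul_eq_mul]; ring

lemma tvDist_mixture_le_of_heavy_abs_sub_le {π : A → ℝ} (hπ0 : ∀ a, 0 ≤ π a)
    (hπ1 : ∑ a, π a = 1) {p q : A → S → ℝ} (hp0 : ∀ a s, 0 ≤ p a s) (hp1 : ∀ a, ∑ s, p a s = 1)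
    (hq0 : ∀ a s, 0 ≤ q a s) (hq1 : ∀ a, ∑ s, q a s = 1) {α : ℝ} (hα : 0 ≤ α)
    (hclose : ∀ a, α / (Fintype.card A * Fintype.card S) ≤ π a →
      ∀ s, |q a s - p a s| ≤ α / Fintype.card S) :
    tvDist (fun s => ∑ a, π a * p a s) (fun s => ∑ a, π a * q a s) ≤ α := by
  have hA := card_pos_of_sum_eq_one hπ1
  obtain ⟨a₀⟩ := Fintype.card_pos_iff.mp hA
  have hS := card_pos_of_sum_eq_one (hp1 a₀)
  calc _ ≤ α / 2 + Fintype.card A * (α / (Fintype.card A * Fintype.card S)) *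
        (Fintype.card S / 2) :=
        tvDist_mixture_le hπ0 hπ1 (by positivity) (by positivity)
          (fun a ha => (tvDist_le_of_forall_abs_sub_le fun s => by
              rw [abs_sub_comm]; exact hclose a ha s).trans_eq (by field_simp))
          (fun a => tvDist_le_card_div_two (hp0 a) (hp1 a) (hq0 a) (hq1 a))
    _ = α := by field_simp; ring

end TotalVariation

lemma two_mul_exp_neg_two_mul_le {N δ x : ℝ} (hδ : 0 < δ) (hδN : δ ≤ 2 * N)
    (hx : Real.log (2 * N / δ) ≤ x) :
    2 * Real.exp (-2 * x) ≤ δ / N := by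
  have hN : 0 < N := by linarith
  have hratio : 0 < 2 * N / δ := by positivity
  have hx0 : 0 ≤ x := (Real.log_nonneg ((one_le_div hδ).mpr hδN)).trans hx
  calc 2 * Real.exp (-2 * x) ≤ 2 * Real.exp (-Real.log (2 * N / δ)) := by
        gcongr; linarith
    _ = δ / N := by
        rw [Real.exp_neg, Real.exp_log hratio]; field_simp

section Concentration

variable {Ω : Type*} [MeasurableSpace Ω] {P : Measure Ω}

lemma measureReal_le_abs_sum_le_of_iIndepFun {ι : Type*} {X : ι → Ω → ℝ}
    (h_indep : iIndepFun X P) {c : ι → NNReal} {s : Finset ι}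
    (h_subG : ∀ i ∈ s, HasSubgaussianMGF (X i) (c i) P) {ε : ℝ} (hε : 0 ≤ ε) :
    P.real {ω | ε ≤ |∑ i ∈ s, X i ω|} ≤ 2 * Real.exp (-ε ^ 2 / (2 * ↑(∑ i ∈ s, c i))) := by
  have := h_indep.isProbabilityMeasure
  have h_indep_neg : iIndepFun (fun i => -X i) P :=
    h_indep.comp (fun _ => Neg.neg) fun _ => measurable_neg
  calc P.real {ω | ε ≤ |∑ i ∈ s, X i ω|}
      ≤ P.real ({ω | ε ≤ ∑ i ∈ s, X i ω} ∪ {ω | ε ≤ ∑ i ∈ s, (-X i) ω}) := by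
        refine measureReal_mono fun ω hω => ?_
        simpa [sum_neg_distrib, le_abs] using hω
    _ ≤ P.real {ω | ε ≤ ∑ i ∈ s, X i ω} + P.real {ω | ε ≤ ∑ i ∈ s, (-X i) ω} :=
        measureReal_union_le _ _
    _ ≤ _ := by
        rw [two_mul]
        exact add_le_add (HasSubgaussianMGF.measure_sum_ge_le_of_iIndepFun h_indep h_subG hε)
          (HasSubgaussianMGF.measure_sum_ge_le_of_iIndepFun h_indep_neg
            (fun i hi => (h_subG i hi).neg) hε)

variable [IsProbabilityMeasure P] {S : Type*} [MeasurableSpace S] [MeasurableSingletonClass S]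

lemma measureReal_lt_abs_freq_sub_le {n : ℕ} (hn : 0 < n) {Y : Fin n → Ω → S}
    (hmeas : ∀ i, Measurable (Y i)) (hindep : iIndepFun Y P) {s' : S} {q : ℝ} (hq : 0 ≤ q)
    (hlaw : ∀ i, P {ω | Y i ω = s'} = ENNReal.ofReal q) {ε : ℝ} (hε : 0 ≤ ε) :
    P.real {ω | ε < |((univ.filter fun i => Y i ω = s').card : ℝ) / n - q|}
      ≤ 2 * Real.exp (-2 * n * ε ^ 2) := by
  set ind : S → ℝ := fun y => if y = s' then 1 else 0
  have hind : Measurable ind :=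
    Measurable.ite (measurableSet_singleton s') measurable_const measurable_const
  have hmean : ∀ i, P[fun ω => ind (Y i ω)] = q := by
    intro i
    rw [show (fun ω => ind (Y i ω)) = (Y i ⁻¹' {s'}).indicator 1 by
        ext; simp [ind, Set.indicator_apply],
      integral_indicator_one (hmeas i (measurableSet_singleton s')), measureReal_def]
    exact (congrArg ENNReal.toReal (hlaw i)).trans (ENNReal.toReal_ofReal hq)
  have hsubG : ∀ i ∈ (univ : Finset (Fin n)),
      HasSubgaussianMGF (fun ω => ind (Y i ω) - q) (1 / 4) P := by
    intro i _
    have h := hasSubgaussianMGF_of_mem_Icc (μ := P) (X := fun ω => ind (Y i ω)) (a := 0) (b := 1)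
      (hind.comp (hmeas i)).aemeasurable (ae_of_all _ fun ω => ?_)
    · rw [hmean i] at h
      convert h using 1
      rw [sub_zero, nnnorm_one]; norm_num
    · simp only [ind]
      split_ifs <;> simp
  have hindep' : iIndepFun (fun i ω => ind (Y i ω) - q) P :=
    hindep.comp (fun _ y => ind y - q) fun _ => hind.sub_const q
  have hcount : ∀ ω, ((univ.filter fun i => Y i ω = s').card : ℝ)
      = ∑ i, (ind (Y i ω) - q) + n * q := by
    intro ω
    rw [natCast_card_filter]
    simp [ind, sum_sub_distrib]
  have hnpos : (0 : ℝ) < n := Nat.cast_pos.mpr hn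
  calc _ ≤ P.real {ω | n * ε ≤ |∑ i, (ind (Y i ω) - q)|} := by
        refine measureReal_mono fun ω hω => ?_
        simp only [Set.mem_ofPred_eq, hcount] at hω ⊢
        rw [show (∑ i, (ind (Y i ω) - q) + n * q) / n - q = (∑ i, (ind (Y i ω) - q)) / n by
          field_simp; ring, abs_div, abs_of_pos hnpos, lt_div_iff₀ hnpos] at hω
        linarith
    _ ≤ _ := measureReal_le_abs_sum_le_of_iIndepFun hindep' hsubG (by positivity)
    _ = 2 * Real.exp (-2 * n * ε ^ 2) := by
        congr 2
        simp only [sum_const, card_univ, Fintype.card_fin, nsmul_eq_mul]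
        push_cast
        field_simp
        ring

lemma ofReal_one_sub_card_mul_le_measure {ι : Type*} [Fintype ι] {G : Set Ω}
    {E : ι → Set Ω} (hG : Gᶜ ⊆ ⋃ i, E i) {r : ℝ} (hE : ∀ i, P.real (E i) ≤ r) :
    ENNReal.ofReal (1 - Fintype.card ι * r) ≤ P G := by
  have hbad : P.real Gᶜ ≤ Fintype.card ι * r :=
    calc P.real Gᶜ ≤ P.real (⋃ i, E i) := measureReal_mono hG
      _ ≤ ∑ i, P.real (E i) := measureReal_iUnion_fintype_le E
      _ ≤ ∑ _i : ι, r := sum_le_sum fun i _ => hE i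
      _ = Fintype.card ι * r := by rw [sum_const, card_univ, nsmul_eq_mul]
  have hunion : 1 ≤ P.real G + P.real Gᶜ := by
    simpa using measureReal_union_le (μ := P) G Gᶜ
  rw [← ofReal_measureReal]
  exact ENNReal.ofReal_le_ofReal (by linarith)

lemma measureReal_lt_abs_freq_sub_le_of_log_div_le {N δ : ℝ} (hδ : 0 < δ) (hδN : δ < 2 * N)
    {n : ℕ} {Y : Fin n → Ω → S} (hmeas : ∀ i, Measurable (Y i)) (hindep : iIndepFun Y P)
    {s' : S} {q : ℝ} (hq : 0 ≤ q) (hlaw : ∀ i, P {ω | Y i ω = s'} = ENNReal.ofReal q) {ε : ℝ}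
    (hε : 0 < ε) (hn : Real.log (2 * N / δ) / ε ^ 2 ≤ n) :
    P.real {ω | ε < |((univ.filter fun i => Y i ω = s').card : ℝ) / n - q|} ≤ δ / N := by
  have hlog : Real.log (2 * N / δ) ≤ n * ε ^ 2 := (div_le_iff₀ (by positivity)).mp hn
  have hn0 : 0 < n := by
    have hL : 0 < Real.log (2 * N / δ) := Real.log_pos ((one_lt_div hδ).mpr hδN)
    exact_mod_cast pos_of_mul_pos_left (hL.trans_le hlog) (sq_nonneg ε)
  calc _ ≤ 2 * Real.exp (-2 * n * ε ^ 2) :=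
        measureReal_lt_abs_freq_sub_le hn0 hmeas hindep hq hlaw hε.le
    _ ≤ δ / N := by
        rw [mul_assoc (-2 : ℝ)]
        exact two_mul_exp_neg_two_mul_le hδ hδN.le hlog

end Concentration

/-- Fix a state `s` of an MDP with transition probabilities
`p a s' = p(s'∣s,a)` and policy probabilities `π a = π(a∣s)`, and set
`η = α/(|A|·|S|)`. If for every action `a` with `π a ≥ η` the empirical estimate
`p̂(·∣s,a)` is the vector of relative frequencies of `m_a` i.i.d. samples from
`p(·∣s,a)` with `m_a ≥ (|S|²/α²)·log(2|A||S|/δ)` (and `p̂(·∣s,a)` is an arbitrary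
probability distribution for the remaining actions), then with probability at least
`1 - δ` the induced next-state distributions `𝒯(·∣s)` and `𝒯̂(·∣s)` are within total
variation `α`. -/
theorem ambs_tabular_tv_bound {S A : Type*} [Fintype S] [Fintype A]
    [MeasurableSpace S] [MeasurableSingletonClass S]
    (p : A → S → ℝ) (hp0 : ∀ a s', 0 ≤ p a s') (hp1 : ∀ a, ∑ s', p a s' = 1)
    (π : A → ℝ) (hπ0 : ∀ a, 0 ≤ π a) (hπ1 : ∑ a, π a = 1)
    (α δ : ℝ) (hα : 0 < α) (hδ : 0 < δ)
    {Ω : Type*} [MeasurableSpace Ω] (P : Measure Ω) [IsProbabilityMeasure P]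
    (m : A → ℕ) (Y : (a : A) → Fin (m a) → Ω → S)
    (phat : Ω → A → S → ℝ)
    (hmeas : ∀ a i, Measurable (Y a i))
    (hindep : ∀ a, α / (Fintype.card A * Fintype.card S) ≤ π a →
      iIndepFun (Y a) P)
    (hlaw : ∀ a, α / (Fintype.card A * Fintype.card S) ≤ π a →
      ∀ i s', P {ω | Y a i ω = s'} = ENNReal.ofReal (p a s'))
    (hm : ∀ a, α / (Fintype.card A * Fintype.card S) ≤ π a →
      (Fintype.card S : ℝ) ^ 2 / α ^ 2 *
          Real.log (2 * Fintype.card A * Fintype.card S / δ) ≤ (m a : ℝ))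
    (hphat : ∀ ω a, α / (Fintype.card A * Fintype.card S) ≤ π a → ∀ s',
      phat ω a s' =
        ((Finset.univ.filter fun i => Y a i ω = s').card : ℝ) / (m a : ℝ))
    (hphatdist : ∀ ω a, (∀ s', 0 ≤ phat ω a s') ∧ ∑ s', phat ω a s' = 1) :
    ENNReal.ofReal (1 - δ) ≤
      P {ω | tvDist (fun s' => ∑ a, π a * p a s')
              (fun s' => ∑ a, π a * phat ω a s') ≤ α} := by
  rcases le_or_gt 1 δ with hδ1 | hδ1
  · simp [ENNReal.ofReal_eq_zero.mpr (by linarith : 1 - δ ≤ 0)]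
  have hA := card_pos_of_sum_eq_one hπ1
  obtain ⟨a₀⟩ := Fintype.card_pos_iff.mp hA
  have hS := card_pos_of_sum_eq_one (hp1 a₀)
  have hN : (1 : ℝ) ≤ Fintype.card A * Fintype.card S := by exact_mod_cast Nat.mul_pos hA hS
  set η := α / (Fintype.card A * Fintype.card S : ℝ)
  let bad : A × S → Set Ω := fun q =>
    {ω | η ≤ π q.1 ∧ α / Fintype.card S < |phat ω q.1 q.2 - p q.1 q.2|}
  have hcover : {ω | tvDist (fun s' => ∑ a, π a * p a s')
      (fun s' => ∑ a, π a * phat ω a s') ≤ α}ᶜ ⊆ ⋃ q, bad q := fun ω hω => by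
    by_contra h
    simp only [bad, Set.mem_iUnion, Set.mem_ofPred_eq, not_exists, not_and, not_lt] at h
    exact hω <| tvDist_mixture_le_of_heavy_abs_sub_le hπ0 hπ1 hp0 hp1
      (fun a => (hphatdist ω a).1) (fun a => (hphatdist ω a).2) hα.le fun a ha s' => h (a, s') ha
  have hbad : ∀ q, P.real (bad q) ≤ δ / (Fintype.card A * Fintype.card S) := by
    rintro ⟨a, s'⟩
    by_cases ha : η ≤ π a
    · simp only [bad, ha, true_and, hphat _ a ha s']
      refine measureReal_lt_abs_freq_sub_le_of_log_div_le hδ (by linarith) (hmeas a)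
        (hindep a ha) (hp0 a s') (fun i => hlaw a ha i s') (div_pos hα (Nat.cast_pos.mpr hS)) ?_
      convert hm a ha using 1
      field_simp
    · simp only [bad, ha, false_and, Set.ofPred_false, measureReal_empty]
      positivity
  calc ENNReal.ofReal (1 - δ)
      = ENNReal.ofReal (1 - Fintype.card (A × S) * (δ / (Fintype.card A * Fintype.card S))) := by
        rw [Fintype.card_prod]; push_cast; field_simp
    _ ≤ _ := ofReal_one_sub_card_mul_le_measure hcover hbad
end
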